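/- If B is locally constructible over A, and A ⊆_t C with A ⊆ C, then B is locally constructible over C by the same construction sequence, A ∪ B ⊆_t C ∪ B, and tp(B/A) ⊢ tp(B/C). -/

import Mathlib

open FirstOrder FirstOrder.Language FirstOrder.Language.Structure Cardinal

universe u

namespace Gaifman

variable (L : FirstOrder.Language.{u, u}) {C : Type u} [L.Structure C]

/-- The set of elements of the monster satisfying the unary predicate `P`. -/
def Pset (Pr : L.Relations 1) : Set C := {x | RelMap Pr ![x]}

/-- A set `A` is complete: every formula `(∃ x̄ ∈ P) ψ(x̄, b̄)` with `b̄ ⊆ A` that is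
satisfied (with witnesses in `P`) has witnesses in `P ∩ A`. -/
def IsComplete (Pr : L.Relations 1) (A : Set C) : Prop :=
  ∀ (n m : ℕ) (ψ : L.Formula (Fin n ⊕ Fin m)) (b : Fin m → C),
    (∀ i, b i ∈ A) →
    (∃ a : Fin n → C, (∀ i, a i ∈ Pset L Pr) ∧ ψ.Realize (Sum.elim a b)) →
    ∃ a : Fin n → C, (∀ i, a i ∈ Pset L Pr ∩ A) ∧ ψ.Realize (Sum.elim a b)

/-- `A ⊆_t B` : every formula with parameters in `A` satisfied by a tuple from `B`
is satisfied by a tuple from `A`. -/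
def SubT (A B : Set C) : Prop :=
  ∀ (n m : ℕ) (ψ : L.Formula (Fin n ⊕ Fin m)) (a : Fin m → C) (b : Fin n → C),
    (∀ i, a i ∈ A) → (∀ i, b i ∈ B) → ψ.Realize (Sum.elim b a) →
    ∃ b' : Fin n → C, (∀ i, b' i ∈ A) ∧ ψ.Realize (Sum.elim b' a)

/-- The type of the tuple `c` over the parameter set `A`, as a set of formulas with
parameters from `A`. -/
def TpSet (A : Set C) {k : ℕ} (c : Fin k → C) :
    Set (Σ m : ℕ, L.Formula (Fin k ⊕ Fin m) × (Fin m → C)) :=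
  {x | (∀ i, x.2.2 i ∈ A) ∧ x.2.1.Realize (Sum.elim c x.2.2)}

/-- Two tuples have the same type over `A`. -/
def SameTpOver (A : Set C) {k : ℕ} (c c' : Fin k → C) : Prop :=
  ∀ (m : ℕ) (φ : L.Formula (Fin k ⊕ Fin m)) (b : Fin m → C), (∀ i, b i ∈ A) →
    (φ.Realize (Sum.elim c b) ↔ φ.Realize (Sum.elim c' b))

/-- `tp(c/B) ∈ S_*(B)` : realizations add no new `P`-points and preserve completeness. -/
def InSStar (Pr : L.Relations 1) (B : Set C) {k : ℕ} (c : Fin k → C) : Prop :=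
  Pset L Pr ∩ (B ∪ Set.range c) = Pset L Pr ∩ B ∧ IsComplete L Pr (B ∪ Set.range c)

/-- The type of `c` over `B` is locally isolated: for every formula `φ` there is a
formula `θ ∈ tp(c/B)` implying the `φ`-part of `tp(c/B)`. -/
def LocallyIsolatedTp (B : Set C) {k : ℕ} (c : Fin k → C) : Prop :=
  ∀ (m : ℕ) (φ : L.Formula (Fin k ⊕ Fin m)),
    ∃ (m' : ℕ) (θ : L.Formula (Fin k ⊕ Fin m')) (a : Fin m' → C),
      (∀ i, a i ∈ B) ∧ θ.Realize (Sum.elim c a) ∧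
      ∀ c' : Fin k → C, θ.Realize (Sum.elim c' a) →
        ∀ b : Fin m → C, (∀ i, b i ∈ B) →
          (φ.Realize (Sum.elim c b) → φ.Realize (Sum.elim c' b))

/-- The type of `c` over `B` is `λ`-isolated over `B₀ ⊆ B`: a subtype of size `< λ`
with parameters in `B₀` implies the whole type. -/
def LamIsolatedTpOver (lam : Cardinal.{u}) (B B₀ : Set C) {k : ℕ} (c : Fin k → C) : Prop :=
  ∃ r ⊆ TpSet L B c, (∀ x ∈ r, ∀ i, x.2.2 i ∈ B₀) ∧ #r < lam ∧
    ∀ c' : Fin k → C, (∀ x ∈ r, x.2.1.Realize (Sum.elim c' x.2.2)) →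
      ∀ x ∈ TpSet L B c, x.2.1.Realize (Sum.elim c' x.2.2)

/-- `D` is `λ`-compact: every type over parameters from `D` of size `< λ` which is
realized in the monster is realized in `D`. -/
def IsLamCompact (lam : Cardinal.{u}) (D : Set C) : Prop :=
  ∀ (k : ℕ) (p : Set (Σ m : ℕ, L.Formula (Fin k ⊕ Fin m) × (Fin m → C))),
    (∀ x ∈ p, ∀ i, x.2.2 i ∈ D) → #p < lam →
    (∃ c : Fin k → C, ∀ x ∈ p, x.2.1.Realize (Sum.elim c x.2.2)) →
    ∃ c : Fin k → C, (∀ i, c i ∈ D) ∧ ∀ x ∈ p, x.2.1.Realize (Sum.elim c x.2.2)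

/-- `B` is locally constructible over `A`: `B = A ∪ {d_i : i < α}` where each
`tp(d_i / A ∪ {d_j : j < i})` is locally isolated. -/
def LocallyConstructibleOver (A B : Set C) : Prop :=
  ∃ (ι : Type u) (r : ι → ι → Prop) (_ : IsWellOrder ι r) (d : ι → C),
    B = A ∪ Set.range d ∧
    ∀ i : ι, LocallyIsolatedTp L (A ∪ d '' {j | r j i}) ![d i]

section Relational

variable (hf : ∀ n, IsEmpty (L.Functions n))

/-- In a relational language, any subset of the monster is (the carrier of) a
substructure. -/
def setSub (A : Set C) : L.Substructure C :=
  { carrier := A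
    fun_mem := fun {n} f => (hf n).elim f }

/-- Truth of a formula at a tuple from `D`, computed in the induced structure on `D`. -/
def SetRealize (D : Set C) {α : Type*} (φ : L.Formula α) (v : α → C) : Prop :=
  ∃ hv : ∀ i, v i ∈ D, φ.Realize (M := ↥(setSub L hf D)) fun i => ⟨v i, hv i⟩

/-- `D` is an elementary substructure of the induced structure on `E`. -/
def ElemPair (D E : Set C) : Prop :=
  D ⊆ E ∧ ∀ (n : ℕ) (φ : L.Formula (Fin n)) (v : Fin n → C), (∀ i, v i ∈ D) →
    (SetRealize L hf D φ v ↔ SetRealize L hf E φ v)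

/-- `D` is an elementary substructure of the monster. -/
def ElemInC (D : Set C) : Prop :=
  ∀ (n : ℕ) (φ : L.Formula (Fin n)) (v : Fin n → C), (∀ i, v i ∈ D) →
    (SetRealize L hf D φ v ↔ φ.Realize v)

/-- Elementary equivalence of two sets, as induced substructures of the monster. -/
def ElemEquivSets (A A' : Set C) : Prop :=
  L.completeTheory ↥(setSub L hf A) = L.completeTheory ↥(setSub L hf A')

/-- The collection `S_*(A)` of complete types over `A` weakly orthogonal to `P`,
represented by the sets of formulas of their realizations. -/
def SStar (Pr : L.Relations 1) (A : Set C) :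
    Set (Σ k : ℕ, Set (Σ m : ℕ, L.Formula (Fin k ⊕ Fin m) × (Fin m → C))) :=
  {q | ∃ (k : ℕ) (c : Fin k → C), InSStar L Pr A c ∧ q = ⟨k, TpSet L A c⟩}

/-- `A` is stable over `P`: for every `A'` elementarily equivalent to `A` (as a
substructure of the monster), `|S_*(A')| ≤ |A'| ^ |T|`. -/
def IsStable (Pr : L.Relations 1) (A : Set C) : Prop :=
  ∀ A' : Set C, ElemEquivSets L hf A A' → #(SStar L Pr A') ≤ #A' ^ (max L.card ℵ₀)

/-- `P` is "very stably embedded": the trace on `P` of any definable set is definable,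
with parameters from `P`, *in the induced structure on `P`*. -/
def VeryStablyEmbedded (Pr : L.Relations 1) : Prop :=
  ∀ (n m : ℕ) (φ : L.Formula (Fin n ⊕ Fin m)) (b : Fin m → C),
    ∃ (m' : ℕ) (ψ : L.Formula (Fin n ⊕ Fin m')) (c : Fin m' → C), (∀ i, c i ∈ Pset L Pr) ∧
      ∀ a : Fin n → C, (∀ i, a i ∈ Pset L Pr) →
        (φ.Realize (Sum.elim a b) ↔ SetRealize L hf (Pset L Pr) ψ (Sum.elim a c))

/-- Every model of `T` (i.e., elementary substructure of the monster) is stable over `P`. -/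
def AllModelsStable (Pr : L.Relations 1) : Prop :=
  ∀ M : L.ElementarySubstructure C, IsStable L hf Pr ((M : L.Substructure C) : Set C)

end Relational

/-- `tp(c/B)` is definable over `D`: each `φ`-type has a definition with parameters in `D`. -/
def DefinableTpOver (B D : Set C) {k : ℕ} (c : Fin k → C) : Prop :=
  ∀ (m : ℕ) (φ : L.Formula (Fin k ⊕ Fin m)),
    ∃ (m' : ℕ) (Ψ : L.Formula (Fin m ⊕ Fin m')) (d : Fin m' → C), (∀ i, d i ∈ D) ∧
      ∀ b : Fin m → C, (∀ i, b i ∈ B) →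
        (φ.Realize (Sum.elim c b) ↔ Ψ.Realize (Sum.elim b d))

/-- `tp(e/B)` is the stationarization of `tp(c/A)` over `B`: for each formula `φ`, a
single definition with parameters in `A` defines both the `φ`-type of `c` over `A`
and the `φ`-type of `e` over `B`. -/
def IsStationarization (A B : Set C) {k : ℕ} (c e : Fin k → C) : Prop :=
  ∀ (m : ℕ) (φ : L.Formula (Fin k ⊕ Fin m)),
    ∃ (m' : ℕ) (Ψ : L.Formula (Fin m ⊕ Fin m')) (a : Fin m' → C), (∀ i, a i ∈ A) ∧
      (∀ b : Fin m → C, (∀ i, b i ∈ A) →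
        (φ.Realize (Sum.elim c b) ↔ Ψ.Realize (Sum.elim b a))) ∧
      (∀ b : Fin m → C, (∀ i, b i ∈ B) →
        (φ.Realize (Sum.elim e b) ↔ Ψ.Realize (Sum.elim b a)))

/-- `D ⫝_A B` : the type over `B` of every tuple from `D` is the stationarization of its
type over `A`. -/
def IndepOver (A B D : Set C) : Prop :=
  ∀ (k : ℕ) (c : Fin k → C), (∀ i, c i ∈ D) → IsStationarization L A B c c


section Systems

variable (hf : ∀ n, IsEmpty (L.Functions n))

/-- The auxiliary language with a unary predicate for each index `s ∈ P(n)`,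
used to view a system of sets as a single structure. -/
def sysLang : FirstOrder.Language.{0, 0} :=
  { Functions := fun _ => Empty
    Relations := fun n => match n with
      | 1 => Finset ℕ
      | _ => Empty }

/-- The structure on (the induced substructure on) `U` interpreting the predicate for
`s` as the set `A s`. -/
def sysStruc (A : Finset ℕ → Set C) (U : Set C) : sysLang.Structure ↥(setSub L hf U) where
  funMap := fun {n} f _ => Empty.elim f
  RelMap := fun {n} => match n with
    | 0 => fun r _ => Empty.elim r
    | 1 => fun s x => (x 0 : C) ∈ A s
    | _ + 2 => fun r _ => Empty.elim r

/-- The union of the sets of a system. -/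
def SysUnion (J : Set (Finset ℕ)) (A : Finset ℕ → Set C) : Set C := ⋃ s ∈ J, A s

/-- Truth of a formula of the expanded language (base language plus a predicate for each
index) in the system with sets `A s`, universe `U`, at a tuple `v` from `U`. -/
def SysRealize (A : Finset ℕ → Set C) (U : Set C) {α : Type*}
    (φ : (L.sum sysLang).Formula α) (v : α → C) : Prop :=
  ∃ hv : ∀ i, v i ∈ U,
    letI : sysLang.Structure ↥(setSub L hf U) := sysStruc L hf A U
    φ.Realize (M := ↥(setSub L hf U)) fun i => ⟨v i, hv i⟩

/-- The system `⟨A s : s ∈ J⟩` is an elementary subsystem of `⟨A' s : s ∈ J⟩`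
(both viewed as structures in the expanded language). -/
def SysElemSub (J : Set (Finset ℕ)) (A A' : Finset ℕ → Set C) : Prop :=
  (∀ s ∈ J, A s ⊆ A' s) ∧
  ∀ (n : ℕ) (φ : (L.sum sysLang).Formula (Fin n)) (v : Fin n → C),
    (∀ i, v i ∈ SysUnion J A) →
    (SysRealize L hf A (SysUnion J A) φ v ↔ SysRealize L hf A' (SysUnion J A') φ v)

/-- The systems `⟨A s : s ∈ J⟩` and `⟨A' s : s ∈ J⟩` are elementarily equivalent
(as structures in the expanded language). -/
def SysElemEquiv (J : Set (Finset ℕ)) (A A' : Finset ℕ → Set C) : Prop :=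
  ∀ φ : (L.sum sysLang).Formula (Fin 0),
    (SysRealize L hf A (SysUnion J A) φ finZeroElim ↔
      SysRealize L hf A' (SysUnion J A') φ finZeroElim)

end Systems

/-- Lexicographic order on finite sets of naturals via characteristic functions, with
position `0` most significant and `0 < 1`. -/
def lexLt (s t : Finset ℕ) : Prop := ∃ k, k ∈ t ∧ k ∉ s ∧ ∀ j < k, (j ∈ s ↔ j ∈ t)

/-- `I` is a weakly nice index set for arity `n`: a hereditary subset of `P(n)`
containing all subsets of `{1, …, n-1}`. -/
def WeaklyNice (n : ℕ) (I : Set (Finset ℕ)) : Prop :=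
  (∀ s ∈ I, s ⊆ Finset.range n) ∧
  (∀ s : Finset ℕ, s ⊆ Finset.range n → 0 ∉ s → s ∈ I) ∧
  (∀ s ∈ I, ∀ t ⊆ s, t ∈ I)

/-- `I` is nice: weakly nice and an initial segment of `P(n)` in lexicographic order. -/
def Nice (n : ℕ) (I : Set (Finset ℕ)) : Prop :=
  WeaklyNice n I ∧ ∀ s ∈ I, ∀ t ⊆ Finset.range n, lexLt t s → t ∈ I

/-- `(I, s)` is nice: `I` is nice, `s` is the lexicographically last element of `I`,
and `0 ∈ s`. -/
def NicePair (n : ℕ) (I : Set (Finset ℕ)) (s : Finset ℕ) : Prop :=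
  Nice n I ∧ s ∈ I ∧ 0 ∈ s ∧ ∀ t ∈ I, t ≠ s → lexLt t s

section GoodSys

variable (Pr : L.Relations 1) (hf : ∀ n, IsEmpty (L.Functions n))

/-- Clauses (ii)-(iv) of the definition of a good system (a weakly good presystem):
intersection condition; `A s ≺ P^C` for `0 ∉ s` and `A s ≺ C` for `0 ∈ s`; and
`A s ∩ P^C = A (s \ {0})`. -/
def WG (I : Set (Finset ℕ)) (A : Finset ℕ → Set C) : Prop :=
  (∀ s ∈ I, ∀ t ∈ I, A s ∩ A t = A (s ∩ t)) ∧
  (∀ s ∈ I, 0 ∉ s → ElemPair L hf (A s) (Pset L Pr)) ∧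
  (∀ s ∈ I, 0 ∈ s → ElemInC L hf (A s)) ∧
  (∀ s ∈ I, A s ∩ Pset L Pr = A (s.erase 0))

/-- Clause (vi): stability of the union over proper subsets of any `s ∈ I` with `0 ∈ s`. -/
def StabClause (I : Set (Finset ℕ)) (A : Finset ℕ → Set C) : Prop :=
  ∀ s ∈ I, 0 ∈ s → IsStable L hf Pr (⋃ t ∈ {t : Finset ℕ | t ⊂ s}, A t)

/-- Clause (vii): witnesses may be moved into `A (s \ {m})`, keeping coordinates with
`m ∉ s` unchanged (`m = n - 1` is the last coordinate). -/
def WitnessClause (m : ℕ) (I : Set (Finset ℕ)) (A : Finset ℕ → Set C) : Prop :=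
  ∀ (k : ℕ) (φ : L.Formula (Fin k)) (σ : Fin k → Finset ℕ) (b : Fin k → C),
    (∀ i, σ i ∈ I) → (∀ i, b i ∈ A (σ i)) → φ.Realize b →
    ∃ b' : Fin k → C, (∀ i, b' i ∈ A ((σ i).erase m)) ∧
      (∀ i, m ∉ σ i → b' i = b i) ∧ φ.Realize b'

/-- `GS Pr hf n I A` : `⟨A s : s ∈ I⟩` is a good system for the (nice) index set
`I ⊆ P(n)`, by recursion on `n` (Definition 5.2 of the paper; clauses (i)-(viii)). -/
def GS : ℕ → Set (Finset ℕ) → (Finset ℕ → Set C) → Prop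
  | 0, I, A => Nice 0 I ∧ WG L Pr hf I A ∧ StabClause L Pr hf I A
  | (m + 1), I, A =>
      Nice (m + 1) I ∧ WG L Pr hf I A ∧ StabClause L Pr hf I A ∧
      (∀ m', m = m' + 1 →
        SysElemSub L hf {s | s ⊆ Finset.Icc 1 m'} A (fun s => A (insert m s)) ∧
        GS m {s | s ⊆ Finset.Icc 1 m'} A ∧
        GS m {s | s ⊆ Finset.Icc 1 m'} (fun s => A (insert m s))) ∧
      WitnessClause L m I A ∧
      GS m {s ∈ I | m ∉ s} A ∧
      GS m {s | m ∉ s ∧ insert m s ∈ I} (fun s => A (insert m s))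

/-- Clause (v) of the definition of a good system, stated separately. -/
def Vclause (n : ℕ) (I : Set (Finset ℕ)) (A : Finset ℕ → Set C) : Prop :=
  ∀ m', n = m' + 2 →
    SysElemSub L hf {s | s ⊆ Finset.Icc 1 m'} A (fun s => A (insert (m' + 1) s)) ∧
    GS L Pr hf (m' + 1) {s | s ⊆ Finset.Icc 1 m'} A ∧
    GS L Pr hf (m' + 1) {s | s ⊆ Finset.Icc 1 m'} (fun s => A (insert (m' + 1) s))

/-- A medium good system: clauses (ii)-(vi). -/
def MG (n : ℕ) (I : Set (Finset ℕ)) (A : Finset ℕ → Set C) : Prop :=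
  WG L Pr hf I A ∧ Vclause L Pr hf n I A ∧ StabClause L Pr hf I A

/-- The index set `P⁻(n)` of all proper subsets of `{0, …, n-1}`. -/
def Pminus (n : ℕ) : Set (Finset ℕ) := {s | s ⊆ Finset.range n ∧ s ≠ Finset.range n}

/-- `T` is `n`-stable over `P`: the union of every good `P⁻(n)`-system is stable. -/
def IsNStable (n : ℕ) : Prop :=
  ∀ A : Finset ℕ → Set C, GS L Pr hf n (Pminus n) A →
    IsStable L hf Pr (⋃ s ∈ Pminus n, A s)

end GoodSys



/-!
If `tp(c/X)` is locally isolated, every definable relation `R(x, ȳ)` has an `X`-definable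
`Θ ∋ c` whose points all have the same `R`-type over `X`. A parameter tuple from `Y` splitting `Θ`
lies in an `X`-definable set, so when `X ⊆_t Y` there would be one in `X`: hence `Θ` decides `R`
over `Y` too. This gives local isolation over `D ∪ {d_j : j < i}`, and, applied to
`∃ x ∈ Θ, R(x, ȳ)`, shows that `X ⊆_t D` implies `X ∪ {c} ⊆_t D`.

For the types: for `z̄` from `X`, `R(c, z̄)` is equivalent to `∀ x ∈ Θ, R(x, z̄)`, a statement
about `z̄` and the parameters of `Θ`, which lie in `X`; and a map `g` preserving `tp(B/A)` sends
`c` into the corresponding image of `Θ`. So if `g` preserves the types over `D` of tuples from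
`X`, it preserves those of tuples from `X ∪ {c}`.

Both properties of `X` depend only on its finite subsets, so they propagate along the
well-ordered construction from `A` to `A ∪ {d_i}`.
-/

open Set

section LocalConstruction

variable {L}

theorem definable_setOf_sumElim_mem {E : Set C} {α β : Type*} [Finite α] [Finite β]
    {S : Set (α ⊕ β → C)} (hS : E.Definable L S) {z : β → C} (hz : ∀ q, z q ∈ E) :
    E.Definable L {x | Sum.elim x z ∈ S} := by
  refine hS.preimage_map (F := fun x => Sum.elim x z) ?_
  rintro (a | q)
  · exact DefinableFun.proj L
  · exact L.definableFun_const _ (hz q)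

theorem definable_setOf_realize_sumElim {E : Set C} {α β : Type*} [Finite α] [Finite β]
    (φ : L.Formula (α ⊕ β)) {a : β → C} (ha : ∀ q, a q ∈ E) :
    E.Definable L {x | φ.Realize (Sum.elim x a)} :=
  definable_setOf_sumElim_mem ((empty_definable_iff.2 ⟨φ, rfl⟩).mono (empty_subset E)) ha

theorem exists_definable_sumElim_of_union {A T : Set C} {α : Type*} {S : Set (α → C)}
    (h : (A ∪ T).Definable L S) :
    ∃ (N : ℕ) (z : Fin N → C) (S₀ : Set (α ⊕ Fin N → C)),
      (∀ q, z q ∈ T) ∧ A.Definable L S₀ ∧ S = {x | Sum.elim x z ∈ S₀} := by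
  classical
  obtain ⟨F, hF, hS⟩ := definable_iff_finitely_definable.mp h
  obtain ⟨φ, rfl⟩ := definable_iff_exists_formula_sum.mp hS
  let e := Fintype.equivFin {p : ↥(F : Set C) // p.1 ∉ A}
  let par : (α ⊕ Fin _ → C) → ↥(F : Set C) → C := fun v p =>
    if h : p.1 ∈ A then p.1 else v (Sum.inr (e ⟨p, h⟩))
  refine ⟨_, fun q => (e.symm q).1.1, {v | φ.Realize (Sum.elim (par v) (v ∘ Sum.inl))},
    fun q => (hF (e.symm q).1.2).resolve_left (e.symm q).2, ?_, ?_⟩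
  · rw [definable_iff_exists_formula_sum]
    refine ⟨φ.relabel (Sum.elim (fun p => if h : p.1 ∈ A then Sum.inl ⟨p.1, h⟩
      else Sum.inr (Sum.inr (e ⟨p, h⟩))) (fun a => Sum.inr (Sum.inl a))), ?_⟩
    ext v
    simp only [mem_ofPred_eq, Formula.realize_relabel]
    congr! 1
    ext (p | a)
    · by_cases h : p.1 ∈ A <;> simp [par, h]
    · rfl
  · ext x
    simp only [mem_ofPred_eq]
    congr! 1
    ext (p | a)
    · by_cases h : p.1 ∈ A <;> simp [par]
    · rfl

theorem exists_formula_of_definable {X : Set C} {α : Type*} {S : Set (α → C)}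
    (h : X.Definable L S) :
    ∃ (N : ℕ) (φ : L.Formula (α ⊕ Fin N)) (a : Fin N → C),
      (∀ q, a q ∈ X) ∧ S = {x | φ.Realize (Sum.elim x a)} := by
  obtain ⟨N, a, S₀, ha, hS₀, rfl⟩ :=
    exists_definable_sumElim_of_union (A := ∅) (T := X) (by rwa [empty_union])
  obtain ⟨φ, rfl⟩ := empty_definable_iff.mp hS₀
  exact ⟨N, φ, a, ha, rfl⟩

theorem subT_refl (X : Set C) : SubT L X X := fun _ _ _ _ b _ hb h => ⟨b, hb, h⟩

theorem subT_iff {X Y : Set C} :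
    SubT L X Y ↔ ∀ {α : Type} [Finite α] (S : Set (α → C)), X.Definable L S →
      ∀ b ∈ S, (∀ i, b i ∈ Y) → ∃ b' ∈ S, ∀ i, b' i ∈ X := by
  constructor
  · intro h α _ S hS b hbS hbY
    obtain ⟨n, ⟨e⟩⟩ := Finite.exists_equiv_fin α
    obtain ⟨m, φ, a, ha, hφ⟩ := exists_formula_of_definable (hS.preimage_comp e)
    have hmem : ∀ x : Fin n → C, x ∘ e ∈ S ↔ φ.Realize (Sum.elim x a) := fun x =>
      Set.ext_iff.1 hφ x
    obtain ⟨b', hb'X, hb'⟩ := h n m φ a (b ∘ e.symm) ha (fun i => hbY _)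
      ((hmem _).1 (by simpa [Function.comp_assoc] using hbS))
    exact ⟨b' ∘ e, (hmem b').2 hb', fun i => hb'X _⟩
  · intro h n m ψ a b ha hb hψ
    obtain ⟨b', hb', hb'X⟩ := h _ (definable_setOf_realize_sumElim ψ ha) b hψ hb
    exact ⟨b', hb'X, hb'⟩

theorem SubT.union_right_self {X Y : Set C} (h : SubT L X Y) : SubT L X (Y ∪ X) := by
  classical
  rw [subT_iff] at h ⊢
  intro α _ S hS b hbS hb
  let e := Equiv.sumCompl fun p => b p ∉ X
  obtain ⟨x, hxS, hxX⟩ := h {x | Sum.elim x (fun p : {p // ¬b p ∉ X} => b p) ∘ e.symm ∈ S}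
    (definable_setOf_sumElim_mem (hS.preimage_comp e.symm) fun p => not_not.mp p.2)
    (fun p => b p) (by
      change _ ∘ e.symm ∈ S
      convert hbS using 1
      funext p
      by_cases hp : b p ∉ X <;> simp [e, hp])
    (fun p => (hb p).resolve_right p.2)
  refine ⟨_, hxS, fun p => ?_⟩
  by_cases hp : b p ∉ X
  · simpa [e, hp] using hxX ⟨p, hp⟩
  · simpa [e, hp] using not_not.mp hp

def DecidesOver {α β : Type*} (X : Set C) (Θ : Set (α → C)) (R : Set (α ⊕ β → C)) : Prop :=
  ∀ x ∈ Θ, ∀ x' ∈ Θ, ∀ b : β → C, (∀ i, b i ∈ X) → (Sum.elim x b ∈ R ↔ Sum.elim x' b ∈ R)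

theorem definable_setOf_exists_sumElim_mem {X : Set C} {α β : Type*} [Finite α]
    {Θ : Set (α → C)} {R : Set (α ⊕ β → C)} (hΘ : X.Definable L Θ) (hR : X.Definable L R) :
    X.Definable L {y | ∃ x ∈ Θ, Sum.elim x y ∈ R} := by
  convert ((hΘ.preimage_comp Sum.inr).inter (hR.preimage_comp Sum.swap)).exists_of_finite
    using 1
  ext y
  simp [Sum.elim_swap]

theorem DecidesOver.of_subT {X Y : Set C} {α : Type*} {β : Type} [Finite α] [Finite β]
    {Θ : Set (α → C)} {R : Set (α ⊕ β → C)} (hΘ : X.Definable L Θ) (hR : X.Definable L R)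
    (h : DecidesOver X Θ R) (hXY : SubT L X Y) : DecidesOver Y Θ R := by
  suffices key : ∀ x ∈ Θ, ∀ x' ∈ Θ, ∀ b : β → C, (∀ i, b i ∈ Y) →
      Sum.elim x b ∈ R → Sum.elim x' b ∈ R from
    fun x hx x' hx' b hb => ⟨key x hx x' hx' b hb, key x' hx' x hx b hb⟩
  intro x hx x' hx' b hb hxb
  by_contra hx'b
  -- `b` splits `Θ` with respect to `R`; `X ⊆_t Y` moves such a splitting parameter into `X`
  obtain ⟨b', ⟨⟨y, hy, hyb'⟩, ⟨y', hy', hy'b'⟩⟩, hb'X⟩ := subT_iff.1 hXY _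
    ((definable_setOf_exists_sumElim_mem hΘ hR).inter
      (definable_setOf_exists_sumElim_mem hΘ hR.compl)) b ⟨⟨x, hx, hxb⟩, ⟨x', hx', hx'b⟩⟩ hb
  exact hy'b' ((h y hy y' hy' b' hb'X).1 hyb')

theorem LocallyIsolatedTp.exists_decidesOver {X : Set C} {k : ℕ} {c : Fin k → C}
    (hc : LocallyIsolatedTp L X c) {β : Type*} [Finite β] {R : Set (Fin k ⊕ β → C)}
    (hR : (∅ : Set C).Definable L R) :
    ∃ Θ : Set (Fin k → C), X.Definable L Θ ∧ c ∈ Θ ∧ DecidesOver X Θ R := by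
  obtain ⟨φ, rfl⟩ := empty_definable_iff.mp hR
  obtain ⟨m, ⟨e⟩⟩ := Finite.exists_equiv_fin β
  let ψ : L.Formula (Fin k ⊕ Fin m) := φ.relabel (Sum.map id e)
  have hψ : ∀ x (b : β → C), ψ.Realize (Sum.elim x (b ∘ e.symm)) ↔ φ.Realize (Sum.elim x b) := by
    intro x b
    simp [ψ, Formula.realize_relabel, Sum.elim_comp_map, Function.comp_assoc]
  obtain ⟨m₁, θ₁, a₁, ha₁, hc₁, h₁⟩ := hc m ψ
  obtain ⟨m₂, θ₂, a₂, ha₂, hc₂, h₂⟩ := hc m ψ.not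
  have same : ∀ x, θ₁.Realize (Sum.elim x a₁) ∧ θ₂.Realize (Sum.elim x a₂) →
      ∀ b : β → C, (∀ i, b i ∈ X) → (φ.Realize (Sum.elim c b) ↔ φ.Realize (Sum.elim x b)) := by
    rintro x ⟨hx₁, hx₂⟩ b hb
    rw [← hψ, ← hψ]
    exact ⟨h₁ x hx₁ _ fun i => hb _, not_imp_not.1 (h₂ x hx₂ _ fun i => hb _)⟩
  refine ⟨_, (definable_setOf_realize_sumElim θ₁ ha₁).inter
    (definable_setOf_realize_sumElim θ₂ ha₂), ⟨hc₁, hc₂⟩, fun x hx x' hx' b hb => ?_⟩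
  exact (same x hx b hb).symm.trans (same x' hx' b hb)

theorem LocallyIsolatedTp.exists_decidesOver_of_subT {X Y : Set C} {k : ℕ} {c : Fin k → C}
    (hc : LocallyIsolatedTp L X c) (hXY : SubT L X Y) {β : Type} [Finite β]
    {R : Set (Fin k ⊕ β → C)} (hR : Y.Definable L R) :
    ∃ Θ : Set (Fin k → C), X.Definable L Θ ∧ c ∈ Θ ∧ DecidesOver Y Θ R := by
  obtain ⟨N, w, R₀, hw, hR₀, rfl⟩ :=
    exists_definable_sumElim_of_union (A := ∅) (T := Y) (by rwa [empty_union])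
  have hR₀' := hR₀.preimage_comp (Equiv.sumAssoc (Fin k) β (Fin N))
  obtain ⟨Θ, hΘ, hcΘ, hdec⟩ := hc.exists_decidesOver hR₀'
  refine ⟨Θ, hΘ, hcΘ, fun x hx x' hx' b hb => ?_⟩
  have hassoc : ∀ x : Fin k → C,
      Sum.elim x (Sum.elim b w) ∘ Equiv.sumAssoc _ _ _ = Sum.elim (Sum.elim x b) w := by
    intro x
    ext ((i | i) | i) <;> rfl
  simpa only [mem_preimage, mem_ofPred_eq, hassoc] using
    hdec.of_subT hΘ (hR₀'.mono (empty_subset X)) hXY x hx x' hx' (Sum.elim b w)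
      (by rintro (i | i); exacts [hb i, hw i])

theorem LocallyIsolatedTp.of_subT {X Y : Set C} {k : ℕ} {c : Fin k → C}
    (hc : LocallyIsolatedTp L X c) (hXY : SubT L X Y) (hsub : X ⊆ Y) :
    LocallyIsolatedTp L Y c := by
  intro m φ
  obtain ⟨Θ, hΘ, hcΘ, hdec⟩ := hc.exists_decidesOver_of_subT hXY
    ((empty_definable_iff.2 ⟨φ, rfl⟩).mono (empty_subset Y))
  obtain ⟨N, θ, a, ha, rfl⟩ := exists_formula_of_definable hΘ
  exact ⟨N, θ, a, fun i => hsub (ha i), hcΘ, fun c' hc' b hb => (hdec c hcΘ c' hc' b hb).1⟩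

theorem SubT.insert {X Y : Set C} {c : C} (hX : SubT L X Y) (hc : LocallyIsolatedTp L X ![c]) :
    SubT L (insert c X) Y := by
  rw [subT_iff] at hX ⊢
  intro α _ S hS b hbS hbY
  obtain ⟨N, z, S₀, hz, hS₀, rfl⟩ :=
    exists_definable_sumElim_of_union (A := X) (T := {c}) (by rwa [union_singleton])
  have hR := hS₀.preimage_comp (Sum.elim Sum.inr fun _ => (Sum.inl 0 : Fin 1 ⊕ α))
  have hRc : ∀ y : α → C, Sum.elim ![c] y ∘ Sum.elim Sum.inr (fun _ => Sum.inl 0) =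
      Sum.elim y z := fun y => by
    ext (p | q)
    · rfl
    · exact (hz q).symm
  obtain ⟨Θ, hΘ, hcΘ, hdec⟩ := hc.exists_decidesOver_of_subT (subT_refl X) hR
  obtain ⟨b', ⟨x, hx, hxb'⟩, hb'X⟩ := hX _ (definable_setOf_exists_sumElim_mem hΘ hR) b
    ⟨![c], hcΘ, by simpa [hRc] using hbS⟩ hbY
  refine ⟨b', ?_, fun i => mem_insert_of_mem c (hb'X i)⟩
  simpa [hRc] using (hdec _ hcΘ x hx b' hb'X).2 hxb'

def IsFinitary (Q : Set C → Prop) : Prop :=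
  ∀ X : Set C, (∀ X₀ ⊆ X, X₀.Finite → ∃ X', X₀ ⊆ X' ∧ X' ⊆ X ∧ Q X') → Q X

theorem isFinitary_subT (Y : Set C) : IsFinitary fun X => SubT L X Y := by
  intro X hX
  rw [subT_iff]
  intro α _ S hS b hbS hbY
  obtain ⟨F, hFX, hF⟩ := definable_iff_finitely_definable.mp hS
  obtain ⟨X', hFX', hX'X, hX'⟩ := hX F hFX F.finite_toSet
  obtain ⟨b', hb'S, hb'X'⟩ := subT_iff.1 hX' S (hF.mono hFX') b hbS hbY
  exact ⟨b', hb'S, fun i => hX'X (hb'X' i)⟩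

section Construction

variable {ι : Type*} {r : ι → ι → Prop} [IsWellOrder ι r]

theorem exists_max_of_isWellOrder {α : Type*} [Finite α] [Nonempty α] (u : α → ι) :
    ∃ p₀, ∀ p, r (u p) (u p₀) ∨ u p = u p₀ := by
  let _ := IsWellOrder.linearOrder r
  obtain ⟨p₀, h⟩ := Finite.exists_max u
  exact ⟨p₀, fun p => (h p).symm⟩

theorem finite_subset_insert_initialSegment {A X₀ : Set C} {d : ι → C} {I : Set ι}
    (hX₀ : X₀.Finite) (h : X₀ ⊆ A ∪ d '' I) :
    X₀ ⊆ A ∨ ∃ j ∈ I, X₀ ⊆ insert (d j) (A ∪ d '' {k | r k j}) := by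
  obtain ⟨J, hJI, hJ, hdJ⟩ := exists_subset_image_finite_and.1
    ⟨X₀ \ A, fun x hx => (h hx.1).resolve_left hx.2, hX₀.sdiff, rfl⟩
  rcases J.eq_empty_or_nonempty with rfl | hne
  · rw [image_empty, sdiff_eq_empty] at hdJ
    exact Or.inl hdJ
  · right
    have := hJ.to_subtype
    have := hne.to_subtype
    obtain ⟨⟨j, hjJ⟩, hj⟩ := exists_max_of_isWellOrder (r := r) (Subtype.val : J → ι)
    refine ⟨j, hJI hjJ, fun x hx => ?_⟩
    by_cases hxA : x ∈ A
    · exact mem_insert_of_mem _ (Or.inl hxA)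
    · obtain ⟨k, hkJ, rfl⟩ : x ∈ d '' J := hdJ ▸ ⟨hx, hxA⟩
      rcases hj ⟨k, hkJ⟩ with hkj | rfl
      · exact mem_insert_of_mem _ (Or.inr ⟨k, hkj, rfl⟩)
      · exact mem_insert _ _

variable {A : Set C} {d : ι → C} {Q : Set C → Prop}

theorem IsFinitary.union_image (hQ : IsFinitary Q) (hA : Q A) {I : Set ι}
    (hI : ∀ j ∈ I, ∀ k, r k j → k ∈ I)
    (hins : ∀ j ∈ I, Q (insert (d j) (A ∪ d '' {k | r k j}))) : Q (A ∪ d '' I) := by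
  refine hQ _ fun X₀ hX₀ hfin => ?_
  rcases finite_subset_insert_initialSegment (r := r) hfin hX₀ with hA' | ⟨j, hj, hX₀j⟩
  · exact ⟨A, hA', subset_union_left, hA⟩
  · refine ⟨_, hX₀j, insert_subset (Or.inr ⟨j, hj, rfl⟩) ?_, hins j hj⟩
    exact union_subset_union_right A (image_mono fun k hk => hI j hj k hk)

theorem IsFinitary.initialSegment (hQ : IsFinitary Q) (hA : Q A)
    (hstep : ∀ j, Q (A ∪ d '' {k | r k j}) → Q (insert (d j) (A ∪ d '' {k | r k j}))) (i : ι) :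
    Q (A ∪ d '' {k | r k i}) := by
  induction i using (IsWellFounded.wf (r := r)).induction with
  | _ i ih =>
    exact hQ.union_image hA (fun j hj k hkj => _root_.trans hkj hj)
      fun j hj => hstep j (ih j hj)

theorem IsFinitary.union_range (hQ : IsFinitary Q) (hA : Q A)
    (hstep : ∀ j, Q (A ∪ d '' {k | r k j}) → Q (insert (d j) (A ∪ d '' {k | r k j}))) :
    Q (A ∪ range d) := by
  rw [← image_univ]
  exact hQ.union_image hA (fun _ _ _ _ => mem_univ _)
    fun j _ => hstep j (hQ.initialSegment hA hstep j)

end Construction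

section Preservation

variable (L) in
def PreservesDefinable (E : Set C) (g : C → C) {α : Type*} (t : α → C) : Prop :=
  ∀ Y : Set (α → C), E.Definable L Y → t ∈ Y → g ∘ t ∈ Y

variable (L) in
def PreservesDefinableOn (E : Set C) (g : C → C) (X : Set C) : Prop :=
  ∀ {α : Type} [Finite α] (t : α → C), (∀ p, t p ∈ X) → PreservesDefinable L E g t

variable {E : Set C} {g : C → C}

theorem PreservesDefinable.mem_iff {α : Type*} {t : α → C} (h : PreservesDefinable L E g t)
    {Y : Set (α → C)} (hY : E.Definable L Y) : t ∈ Y ↔ g ∘ t ∈ Y :=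
  ⟨h Y hY, not_imp_not.1 (h Yᶜ hY.compl)⟩

theorem PreservesDefinable.comp_right {α β : Type*} {t : α → C}
    (h : PreservesDefinable L E g t) (f : β → α) : PreservesDefinable L E g (t ∘ f) :=
  fun _ hY ht => h _ (hY.preimage_comp f) ht

theorem PreservesDefinableOn.mono {E' X X' : Set C} (h : PreservesDefinableOn L E g X)
    (hE : E' ⊆ E) (hX : X' ⊆ X) : PreservesDefinableOn L E' g X' :=
  fun t ht Y hY => h t (fun p => hX (ht p)) Y (hY.mono hE)

theorem preservesDefinableOn_of_realize {A B : Set C}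
    (h : ∀ (n m : ℕ) (φ : L.Formula (Fin n ⊕ Fin m)) (b : Fin n → C) (a : Fin m → C),
      (∀ i, b i ∈ B) → (∀ i, a i ∈ A) → φ.Realize (Sum.elim b a) →
        φ.Realize (Sum.elim (g ∘ b) a)) :
    PreservesDefinableOn L A g B := by
  intro α _ t ht
  obtain ⟨n, ⟨e⟩⟩ := Finite.exists_equiv_fin α
  suffices PreservesDefinable L A g (t ∘ e.symm) by
    simpa [Function.comp_assoc] using this.comp_right e
  intro Y hY htY
  obtain ⟨m, φ, a, ha, rfl⟩ := exists_formula_of_definable hY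
  exact h n m φ _ a (fun i => ht _) ha htY

theorem isFinitary_preservesDefinableOn (E : Set C) (g : C → C) :
    IsFinitary (PreservesDefinableOn L E g) := by
  intro X hX α _ t ht
  obtain ⟨X', htX', hX'X, hX'⟩ := hX (range t) (range_subset_iff.2 ht) (finite_range t)
  exact hX' t fun p => htX' (mem_range_self p)

theorem LocallyIsolatedTp.preservesDefinable_sumElim {X : Set C} {k : ℕ} {c : Fin k → C}
    (hc : LocallyIsolatedTp L X c) (hsub : SubT L X (E ∪ X))
    (hX : PreservesDefinableOn L E g X) (hcX : PreservesDefinableOn L ∅ g (X ∪ range c))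
    {β : Type} [Finite β] {z : β → C} (hz : ∀ p, z p ∈ X) :
    PreservesDefinable L E g (Sum.elim c z) := by
  intro Y hY hcz
  obtain ⟨Θ, hΘ, hcΘ, hdec⟩ := hc.exists_decidesOver_of_subT hsub (hY.mono subset_union_left)
  obtain ⟨N, w, Θ₀, hw, hΘ₀, rfl⟩ :=
    exists_definable_sumElim_of_union (A := ∅) (T := X) (by rwa [empty_union])
  -- every `x` with `Θ₀(x, w)` behaves like `c` on `Y`: an `E`-definable property of `(z, w)`
  let Ψ : Set (β ⊕ Fin N → C) :=
    {s | ∀ x, Sum.elim x (s ∘ Sum.inr) ∈ Θ₀ → Sum.elim x (s ∘ Sum.inl) ∈ Y}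
  have hΨ : E.Definable L Ψ := by
    convert (((hΘ₀.mono (empty_subset E)).preimage_comp
      (Sum.elim Sum.inr (Sum.inl ∘ Sum.inr))).compl.union
      (hY.preimage_comp (Sum.elim Sum.inr (Sum.inl ∘ Sum.inl)))).forall_of_finite
      (β := Fin k) using 1
    ext s
    simp [Ψ, imp_iff_not_or, Sum.comp_elim, ← Function.comp_assoc]
  have hzw : Sum.elim z w ∈ Ψ := fun x hx =>
    (hdec c hcΘ x hx z fun p => Or.inr (hz p)).1 hcz
  have hgzw := hX (Sum.elim z w) (by rintro (p | q); exacts [hz p, hw q]) Ψ hΨ hzw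
  have hgcw := hcX (Sum.elim c w) (by rintro (i | q); exacts [Or.inr ⟨i, rfl⟩, Or.inl (hw q)])
    Θ₀ hΘ₀ hcΘ
  rw [Sum.comp_elim] at hgcw ⊢
  exact hgzw (g ∘ c) hgcw

theorem PreservesDefinableOn.insert {X : Set C} {c : C} (hX : PreservesDefinableOn L E g X)
    (hc : LocallyIsolatedTp L X ![c]) (hsub : SubT L X (E ∪ X))
    (hcX : PreservesDefinableOn L ∅ g (insert c X)) :
    PreservesDefinableOn L E g (insert c X) := by
  classical
  intro α _ t ht
  let σ : α → Fin 1 ⊕ {p // t p ≠ c} := fun p =>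
    if h : t p = c then Sum.inl 0 else Sum.inr ⟨p, h⟩
  have htσ : Sum.elim ![c] (fun p : {p // t p ≠ c} => t p) ∘ σ = t := by
    funext p
    by_cases h : t p = c <;> simp [σ, h]
  rw [← htσ]
  refine (hc.preservesDefinable_sumElim (z := fun p : {p // t p ≠ c} => t p) hsub hX
    (hcX.mono subset_rfl ?_) fun p => (ht p).resolve_left p.2).comp_right σ
  exact union_subset (subset_insert c X) (range_subset_iff.2 fun i => by simp)

end Preservation

end LocalConstruction

/-- local constructions transfer along `⊆_t`: if `B` is locally
constructible over `A` and `A ⊆_t D`, then the same sequence is a local construction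
over `D`, `A ∪ B ⊆_t D ∪ B`, and `tp(B/A) ⊢ tp(B/D)`. -/
theorem statement_17 (A B D : Set C) (hAD : A ⊆ D) (ht : SubT L A D)
    (ι : Type u) (r : ι → ι → Prop) (hwo : IsWellOrder ι r) (d : ι → C)
    (hB : B = A ∪ Set.range d)
    (hli : ∀ i : ι, LocallyIsolatedTp L (A ∪ d '' {j | r j i}) ![d i]) :
    (∀ i : ι, LocallyIsolatedTp L (D ∪ d '' {j | r j i}) ![d i]) ∧
    LocallyConstructibleOver L D (D ∪ Set.range d) ∧
    SubT L (A ∪ B) (D ∪ B) ∧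
    (∀ g : C → C, (∀ a ∈ A, g a = a) →
      (∀ (n m : ℕ) (φ : L.Formula (Fin n ⊕ Fin m)) (b : Fin n → C) (a : Fin m → C),
        (∀ i, b i ∈ B) → (∀ i, a i ∈ A) →
        (φ.Realize (Sum.elim b a) ↔ φ.Realize (Sum.elim (g ∘ b) a))) →
      ∀ (n m : ℕ) (φ : L.Formula (Fin n ⊕ Fin m)) (b : Fin n → C) (e : Fin m → C),
        (∀ i, b i ∈ B) → (∀ i, e i ∈ D) →
        (φ.Realize (Sum.elim b e) ↔ φ.Realize (Sum.elim (g ∘ b) e))) := by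
  subst hB
  have := hwo
  have hsub : ∀ i, SubT L (A ∪ d '' {j | r j i}) D :=
    (isFinitary_subT D).initialSegment ht fun j h => h.insert (hli j)
  have hiso : ∀ i, LocallyIsolatedTp L (D ∪ d '' {j | r j i}) ![d i] := fun i => by
    simpa [← union_assoc, union_eq_left.2 hAD] using
      (hli i).of_subT (hsub i).union_right_self subset_union_right
  refine ⟨hiso, ⟨ι, r, hwo, d, rfl, hiso⟩, ?_, ?_⟩
  · simpa [← union_assoc] using
      ((isFinitary_subT D).union_range ht fun j h => h.insert (hli j)).union_right_self
  · intro g hgA hgB n m φ b e hb he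
    have hgB' : PreservesDefinableOn L ∅ g (A ∪ range d) :=
      PreservesDefinableOn.mono
        (preservesDefinableOn_of_realize fun _ _ _ _ _ hb ha => (hgB _ _ _ _ _ hb ha).1)
        (empty_subset A) subset_rfl
    have hgD : PreservesDefinableOn L D g A := fun t htA _ _ htY => by
      rwa [show g ∘ t = t from funext fun p => hgA _ (htA p)]
    have hpres : PreservesDefinableOn L D g (A ∪ range d) :=
      (isFinitary_preservesDefinableOn D g).union_range hgD fun j h =>
        h.insert (hli j) (hsub j).union_right_self (hgB'.mono subset_rfl
          (insert_subset (Or.inr ⟨j, rfl⟩) (union_subset_union_right A (image_subset_range _ _))))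
    exact (hpres b hb).mem_iff (definable_setOf_realize_sumElim φ he)

end Gaifman
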